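/- arXiv:1601.03934 — 5 statements merged into one kernel-verified Lean document; each statement's English description precedes it below -/
import Mathlib

section
/- For every integer n ≥ 1, the polynomial (-1)^{n-1} q^{n(n-1)/2} - 1 is divisible by the n-th cyclotomic polynomial Φ_n(q) in ℤ[q]. Equivalently, (-1)^{n-1} q^{binom(n,2)} ≡ 1 (mod Φ_n(q)). -/
/-!
If `n = 2k + 1` then `binom(n, 2) = n k` and the sign is `+1`, so `Φ_n ∣ X^n - 1 ∣ X^{nk} - 1`.
If `n = 2k` then `binom(n, 2) = k (n - 1)` with `n - 1` odd and the sign is `-1`, so the claim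
becomes `Φ_n ∣ (X^k)^{n-1} + 1`, which is a multiple of `X^k + 1`; and `Φ_n ∣ X^k + 1` because
`(X^k - 1) Φ_n ∣ X^n - 1 = (X^k - 1)(X^k + 1)` and `X^k - 1` is monic.
-/

open Polynomial

namespace Polynomial

variable {R : Type*} [CommRing R]

theorem cyclotomic_dvd_X_pow_mul_sub_one (n k : ℕ) : cyclotomic n R ∣ X ^ (n * k) - 1 :=
  (cyclotomic.dvd_X_pow_sub_one n R).trans <| by
    simpa [pow_mul] using sub_dvd_pow_sub_pow ((X : R[X]) ^ n) 1 k

theorem cyclotomic_two_mul_dvd_X_pow_add_one (k : ℕ) : cyclotomic (2 * k) R ∣ X ^ k + 1 := by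
  obtain rfl | hk := eq_or_ne k 0
  · simp
  have hdiv : k ∈ (2 * k).properDivisors :=
    Nat.mem_properDivisors.2 ⟨dvd_mul_left k 2, by omega⟩
  obtain ⟨c, hc⟩ := X_pow_sub_one_mul_cyclotomic_dvd_X_pow_sub_one_of_dvd R hdiv
  have hmonic : ((X : R[X]) ^ k - 1).Monic := monic_X_pow_sub_C 1 hk
  refine ⟨c, hmonic.isRegular.left ?_⟩
  simp only [← mul_assoc, ← hc]
  ring

theorem cyclotomic_dvd_neg_one_pow_mul_X_pow_choose_two_sub_one (n : ℕ) :
    cyclotomic n R ∣ (-1) ^ (n - 1) * X ^ n.choose 2 - 1 := by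
  obtain ⟨k, rfl | rfl⟩ := Nat.even_or_odd' n
  · obtain rfl | hk := eq_or_ne k 0
    · simp
    have hodd : Odd (2 * k - 1) := Nat.odd_iff.2 (by omega)
    have hchoose : (2 * k).choose 2 = k * (2 * k - 1) := by
      rw [Nat.choose_two_right, mul_assoc, Nat.mul_div_cancel_left _ two_pos]
    rw [hodd.neg_one_pow, hchoose, pow_mul, neg_one_mul, ← neg_add', dvd_neg]
    exact (cyclotomic_two_mul_dvd_X_pow_add_one k).trans <| by
      simpa using hodd.add_dvd_pow_add_pow ((X : R[X]) ^ k) 1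
  · have hchoose : (2 * k + 1).choose 2 = (2 * k + 1) * k := by
      rw [Nat.choose_two_right, Nat.add_sub_cancel, mul_left_comm,
        Nat.mul_div_cancel_left _ two_pos]
    rw [Nat.add_sub_cancel, (even_two_mul k).neg_one_pow, one_mul, hchoose]
    exact cyclotomic_dvd_X_pow_mul_sub_one _ _

end Polynomial

theorem stmt2_general (n : ℕ) :
    Polynomial.cyclotomic n ℤ ∣
      (Polynomial.C ((-1 : ℤ) ^ (n - 1)) * Polynomial.X ^ (n * (n - 1) / 2) - 1) := by
  simpa [Nat.choose_two_right] using
    cyclotomic_dvd_neg_one_pow_mul_X_pow_choose_two_sub_one (R := ℤ) n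

/-- For `n ≥ 1`, `(-1)^{n-1} q^{n(n-1)/2} - 1` is divisible by `Φ_n(q)` in `ℤ[q]`. -/
theorem stmt2 (n : ℕ) (hn : 1 ≤ n) :
    Polynomial.cyclotomic n ℤ ∣
      (Polynomial.C ((-1 : ℤ) ^ (n - 1)) * Polynomial.X ^ (n * (n - 1) / 2) - 1) :=
  stmt2_general n
end

section
/- For positive integers s, n and 1 ≤ j ≤ n-1, the Gaussian binomial coefficient qbinom(sn, j) is divisible by Φ_n(q) in ℤ[q]. -/
open Polynomial Finset

/-- The variable `q` as a rational function over `ℚ`. -/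
noncomputable def qv : RatFunc ℚ := RatFunc.X

/-- The q-Pochhammer symbol `(x; t)_k = (1-x)(1-xt)⋯(1-xt^{k-1})`. -/
noncomputable def qPochAt (x t : RatFunc ℚ) (k : ℕ) : RatFunc ℚ :=
  ∏ i ∈ Finset.range k, (1 - x * t ^ i)

/-- The Gaussian binomial coefficient `[α choose k]_t = (t^{α-k+1}; t)_k / (t; t)_k`
with integer upper argument. -/
noncomputable def qbinomAt (t : RatFunc ℚ) (α : ℤ) (k : ℕ) : RatFunc ℚ :=
  (∏ i ∈ Finset.range k, (1 - t ^ (α - k + 1 + i))) /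
    (∏ i ∈ Finset.range k, (1 - t ^ (i + 1)))

/-- The Gaussian binomial coefficient in the variable `q`. -/
noncomputable def qbinom (α : ℤ) (k : ℕ) : RatFunc ℚ := qbinomAt qv α k

/-- The image of an integer polynomial in `RatFunc ℚ`. -/
noncomputable def toF (g : Polynomial ℤ) : RatFunc ℚ :=
  Polynomial.aeval (RatFunc.X : RatFunc ℚ) g

/-- `A ≡ B (mod Φ_n(q)^m)` in the localization of `ℤ[q]` at polynomials coprime
to `Φ_n`: there are `f g : ℤ[q]` with `Φ_n ∤ g` and `(A - B) * g = Φ_n^m * f`. -/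
def modCong (n m : ℕ) (A B : RatFunc ℚ) : Prop :=
  ∃ f g : Polynomial ℤ, ¬ (Polynomial.cyclotomic n ℤ ∣ g) ∧
    (A - B) * toF g = toF ((Polynomial.cyclotomic n ℤ) ^ m * f)

/-- The q-integer `[m]_q = (1-q^m)/(1-q)`. -/
noncomputable def qint (m : ℤ) : RatFunc ℚ := (1 - qv ^ m) / (1 - qv)

/-! Since `X ^ m - 1 = ∏_{d ∣ m} Φ_d`, the product `∏_{i=1}^{j} (X ^ (a + i) - 1)` equals
`∏_d Φ_d ^ (⌊(a + j) / d⌋ - ⌊a / d⌋)`. As `⌊(a + j) / d⌋ - ⌊a / d⌋ ≥ ⌊j / d⌋`, the denominator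
`∏_{i=1}^{j} (X ^ i - 1)` of `[a + j choose j]_q` divides its numerator, and for `d = n` with
`n ∣ a + j` and `0 < j < n` the numerator exponent is `1` while the denominator exponent is `0`. -/

theorem toF_eq_algebraMap (g : ℤ[X]) :
    toF g = algebraMap ℚ[X] (RatFunc ℚ) (g.map (Int.castRingHom ℚ)) := by
  rw [toF, ← RatFunc.algebraMap_X, aeval_algebraMap_apply, aeval_def]
  rfl

theorem toF_ne_zero {g : ℤ[X]} (hg : g ≠ 0) : toF g ≠ 0 := by
  rw [toF_eq_algebraMap]
  exact (map_ne_zero_iff _ (RatFunc.algebraMap_injective ℚ)).2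
    ((Polynomial.map_ne_zero_iff Int.cast_injective).2 hg)

theorem card_filter_range_dvd_add (d a j : ℕ) :
    #{i ∈ range j | d ∣ a + 1 + i} = (a + j) / d - a / d := by
  induction j with
  | zero => simp
  | succ j ih =>
    have hmono : a / d ≤ (a + j) / d := Nat.div_le_div_right (by omega)
    have hsucc : (a + j + 1) / d = (a + j) / d + if d ∣ a + j + 1 then 1 else 0 := Nat.succ_div
    rw [range_add_one, filter_insert, ← add_assoc, hsucc, show a + 1 + j = a + j + 1 by omega]
    split_ifs with h
    · rw [card_insert_of_notMem (by simp), ih]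
      omega
    · rw [ih]
      omega

def consecutiveDivisors (a j : ℕ) : Multiset ℕ :=
  (range j).val.bind fun i => (a + 1 + i).divisors.val

theorem count_consecutiveDivisors (d a j : ℕ) :
    (consecutiveDivisors a j).count d = (a + j) / d - a / d := by
  rw [consecutiveDivisors, Multiset.count_bind, ← card_filter_range_dvd_add, card_filter,
    sum_eq_multiset_sum]
  refine congrArg _ (Multiset.map_congr rfl fun i _ => ?_)
  rw [Multiset.count_eq_of_nodup (a + 1 + i).divisors.nodup]
  simp [Nat.mem_divisors]

theorem prod_cyclotomic_consecutiveDivisors (R : Type*) [CommRing R] (a j : ℕ) :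
    ((consecutiveDivisors a j).map (cyclotomic · R)).prod =
      ∏ i ∈ range j, (X ^ (a + 1 + i) - 1 : R[X]) := by
  rw [consecutiveDivisors, Multiset.map_bind, Multiset.prod_bind, prod_eq_multiset_prod]
  refine congrArg _ (Multiset.map_congr rfl fun i _ => ?_)
  rw [← prod_eq_multiset_prod]
  exact prod_cyclotomic_eq_X_pow_sub_one (by omega) R

theorem cyclotomic_mul_prod_dvd_prod_X_pow_sub_one (R : Type*) [CommRing R] {n a j : ℕ}
    (hj : 0 < j) (hjn : j < n) (hn : n ∣ a + j) :
    cyclotomic n R * ∏ i ∈ range j, (X ^ (i + 1) - 1) ∣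
      ∏ i ∈ range j, (X ^ (a + 1 + i) - 1) := by
  have hle : n ::ₘ consecutiveDivisors 0 j ≤ consecutiveDivisors a j := by
    refine Multiset.le_iff_count.2 fun d => ?_
    rw [Multiset.count_cons, count_consecutiveDivisors, count_consecutiveDivisors, zero_add,
      Nat.zero_div]
    split_ifs with hd
    · subst hd
      have hlt : a / d < (a + j) / d :=
        (Nat.div_lt_iff_lt_mul (by omega)).2 (by rw [Nat.div_mul_cancel hn]; omega)
      rw [Nat.div_eq_of_lt hjn]
      omega
    · have := @Nat.div_add_div_le_add_div a j d
      omega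
  have := Multiset.prod_dvd_prod_of_le (Multiset.map_le_map (f := (cyclotomic · R)) hle)
  rw [Multiset.map_cons, Multiset.prod_cons, prod_cyclotomic_consecutiveDivisors,
    prod_cyclotomic_consecutiveDivisors] at this
  simpa only [zero_add, Nat.add_comm 1] using this

theorem qbinom_natCast_add (a j : ℕ) :
    qbinom ((a + j : ℕ) : ℤ) j =
      toF (∏ i ∈ range j, (X ^ (a + 1 + i) - 1)) / toF (∏ i ∈ range j, (X ^ (i + 1) - 1)) := by
  have hfactor (m : ℕ) : 1 - qv ^ m = -toF (X ^ m - 1) := by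
    simp [toF, qv]
  have hnum (i : ℕ) : ((a + j : ℕ) : ℤ) - j + 1 + i = ((a + 1 + i : ℕ) : ℤ) := by
    push_cast; ring
  simp only [qbinom, qbinomAt, hnum, zpow_natCast, hfactor, prod_neg, toF, map_prod]
  exact mul_div_mul_left _ _ (pow_ne_zero _ (neg_ne_zero.2 (one_ne_zero (α := RatFunc ℚ))))

theorem stmt4_general (s n j : ℕ) (hs : 1 ≤ s) (hj1 : 1 ≤ j) (hj2 : j ≤ n - 1) :
    ∃ f : Polynomial ℤ, qbinom ((s * n : ℕ) : ℤ) j = toF (Polynomial.cyclotomic n ℤ * f) := by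
  have hjn : j < n := by omega
  have hsn : s * n = (s * n - j) + j :=
    (Nat.sub_add_cancel (hjn.le.trans (Nat.le_mul_of_pos_left n hs))).symm
  obtain ⟨f, hf⟩ := cyclotomic_mul_prod_dvd_prod_X_pow_sub_one ℤ hj1 hjn
    (hsn ▸ dvd_mul_left n s)
  have hden : toF (∏ i ∈ range j, (X ^ (i + 1) - 1)) ≠ 0 :=
    toF_ne_zero <| prod_ne_zero_iff.2 fun i _ => by
      simpa using X_pow_sub_C_ne_zero i.succ_pos (1 : ℤ)
  refine ⟨f, ?_⟩
  rw [hsn, qbinom_natCast_add, hf, mul_right_comm]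
  simp only [toF, map_mul] at hden ⊢
  exact mul_div_cancel_right₀ _ hden

/-- For `s ≥ 1` and `1 ≤ j ≤ n-1`, `Φ_n(q)` divides `[sn choose j]_q` in `ℤ[q]`. -/
theorem stmt4 (s n j : ℕ) (hs : 1 ≤ s) (hj1 : 1 ≤ j) (hj2 : j ≤ n - 1) (hn : 1 ≤ n) :
    ∃ f : Polynomial ℤ, qbinom ((s * n : ℕ) : ℤ) j = toF (Polynomial.cyclotomic n ℤ * f) :=
  stmt4_general s n j hs hj1 hj2
end

section
/- (q-binomial transform fixed point) Let n ≥ 1 and let f_0(q), …, f_{n-1}(q) ∈ ℤ[q]. Define the q-dual sequence by f̂_k(q) = Σ_{j=0}^{k} (-1)^j q^{binom(j+1,2)} qbinom(k, j) f_j(q). Then for every integer a with 0 ≤ a ≤ n-1, Σ_{k=0}^{a} q^{k²+k} qbinom(a, k) qbinom(-1-a, k) f̂_k(q) = (-1)^a q^{binom(a+1,2)} Σ_{j=0}^{a} q^{j²+j} qbinom(a, j) qbinom(-1-a, j) f_j(q), as an identity in ℤ[q, q^{-1}]. -/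
open Polynomial Finset

/-- The q-dual `f̂_k(q) = Σ_{j=0}^k (-1)^j q^{binom(j+1,2)} [k choose j]_q f_j(q)`. -/
noncomputable def qdual (f : ℕ → Polynomial ℤ) (k : ℕ) : RatFunc ℚ :=
  ∑ j ∈ Finset.range (k + 1),
    (-1 : RatFunc ℚ) ^ j * qv ^ (j * (j + 1) / 2) * qbinom k j * toF (f j)

/-! Swapping the two sums, the coefficient of `f_j` on the left is
`Σ_k q^{k²+k} [a,k] [-1-a,k] [k,j]`. Trinomial revision `[a,k] [k,j] = [a,j] [a-j,k-j]` turns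
it into a q-Chu–Vandermonde convolution, which sums to `q^{a²+a} [a,j] [-1-j,a]`. Finally
`[-1-j,a]` and `[-1-a,j]` are both, up to a sign and a power of `q`, equal to `[a+j,j]`, which
produces the factor `(-1)^a q^{binom(a+1,2)}`. -/

section QPochhammer

variable (x t : RatFunc ℚ)

lemma qPochAt_succ (k : ℕ) : qPochAt x t (k + 1) = qPochAt x t k * (1 - x * t ^ k) :=
  prod_range_succ _ _

lemma qPochAt_succ' (k : ℕ) : qPochAt x t (k + 1) = (1 - x) * qPochAt (x * t) t k := by
  simp only [qPochAt, prod_range_succ', pow_succ', pow_zero, mul_one, mul_assoc]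
  exact mul_comm _ _

lemma qPochAt_add (m n : ℕ) : qPochAt x t (m + n) = qPochAt x t m * qPochAt (x * t ^ m) t n := by
  simp only [qPochAt, prod_range_add, pow_add, mul_assoc]

end QPochhammer

lemma qPochAt_eq_neg_pow_mul {x t : RatFunc ℚ} (hx : x ≠ 0) (ht : t ≠ 0) (k : ℕ) :
    qPochAt x t k = (-x) ^ k * t ^ k.choose 2 * qPochAt (x⁻¹ * t ^ (1 - (k : ℤ))) t k := by
  have hfactor : ∀ i ∈ range k, 1 - x * t ^ i =
      -(x * t ^ i) * (1 - x⁻¹ * t ^ (1 - (k : ℤ)) * t ^ (k - 1 - i)) := by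
    intro i hi
    have hik : i < k := mem_range.1 hi
    have hexp : x⁻¹ * t ^ (1 - (k : ℤ)) * t ^ (k - 1 - i) = (x * t ^ i)⁻¹ := by
      rw [← zpow_natCast, mul_assoc, ← zpow_add₀ ht, mul_inv, ← zpow_natCast t i,
        ← zpow_neg]
      congr 2
      omega
    rw [hexp]
    field_simp
    ring
  rw [qPochAt, prod_congr rfl hfactor, prod_mul_distrib, qPochAt,
    prod_range_reflect (fun i => 1 - x⁻¹ * t ^ (1 - (k : ℤ)) * t ^ i) k]
  congr 1
  rw [prod_neg, prod_mul_distrib, prod_const, card_range, prod_pow_eq_pow_sum, sum_range_id,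
    ← Nat.choose_two_right]
  ring

lemma qv_ne_zero : qv ≠ 0 := RatFunc.X_ne_zero

lemma qv_pow_ne_one {n : ℕ} (hn : n ≠ 0) : qv ^ n ≠ 1 := by
  intro h
  have hX : (X : ℚ[X]) ^ n = 1 :=
    RatFunc.algebraMap_injective ℚ (by simpa [qv, RatFunc.algebraMap_X] using h)
  simpa [hn] using congrArg natDegree hX

lemma qPochAt_qv_qv_ne_zero (k : ℕ) : qPochAt qv qv k ≠ 0 :=
  prod_ne_zero_iff.2 fun i _ => by
    rw [← pow_succ']
    exact sub_ne_zero.2 (qv_pow_ne_one i.succ_ne_zero).symm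

lemma qbinom_eq_div (α : ℤ) (k : ℕ) :
    qbinom α k = qPochAt (qv ^ (α - k + 1)) qv k / qPochAt qv qv k := by
  simp only [qbinom, qbinomAt, qPochAt, zpow_add₀ qv_ne_zero, zpow_natCast, pow_succ']

lemma qbinom_zero_right (α : ℤ) : qbinom α 0 = 1 := by
  simp [qbinom, qbinomAt]

lemma qbinom_natCast_of_lt {a k : ℕ} (h : a < k) : qbinom a k = 0 := by
  rw [qbinom, qbinomAt, prod_eq_zero (mem_range.2 (show k - 1 - a < k by omega)), zero_div]
  rw [show (a : ℤ) - k + 1 + (k - 1 - a : ℕ) = 0 by omega, zpow_zero, sub_self]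

lemma qbinom_natCast_add_s8 (k m : ℕ) :
    qbinom ((k + m : ℕ) : ℤ) k =
      qPochAt qv qv (k + m) / (qPochAt qv qv k * qPochAt qv qv m) := by
  have hnum : qPochAt (qv ^ (((k + m : ℕ) : ℤ) - k + 1)) qv k = qPochAt (qv * qv ^ m) qv k := by
    rw [show ((k + m : ℕ) : ℤ) - k + 1 = (m : ℤ) + 1 by push_cast; ring,
      zpow_add_one₀ qv_ne_zero, zpow_natCast, mul_comm]
  rw [qbinom_eq_div, hnum, add_comm k m, qPochAt_add]
  have := qPochAt_qv_qv_ne_zero m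
  field_simp

lemma qbinom_natCast_add_comm (k m : ℕ) :
    qbinom ((k + m : ℕ) : ℤ) k = qbinom ((k + m : ℕ) : ℤ) m := by
  rw [qbinom_natCast_add_s8, add_comm k m, qbinom_natCast_add_s8, mul_comm]

lemma qbinom_succ_succ (α : ℤ) (k : ℕ) :
    qbinom (α + 1) (k + 1) = qbinom α (k + 1) + qv ^ (α - k) * qbinom α k := by
  set M := qPochAt (qv ^ (α - k + 1)) qv k
  have hnum₁ :
      qPochAt (qv ^ (α + 1 - ((k + 1 : ℕ) : ℤ) + 1)) qv (k + 1) = M * (1 - qv ^ (α + 1)) := by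
    rw [qPochAt_succ, show α + 1 - ((k + 1 : ℕ) : ℤ) + 1 = α - k + 1 by push_cast; ring,
      ← zpow_natCast, ← zpow_add₀ qv_ne_zero, show α - k + 1 + k = α + 1 by ring]
  have hnum₂ :
      qPochAt (qv ^ (α - ((k + 1 : ℕ) : ℤ) + 1)) qv (k + 1) = (1 - qv ^ (α - k)) * M := by
    rw [qPochAt_succ', show α - ((k + 1 : ℕ) : ℤ) + 1 = α - k by push_cast; ring,
      ← zpow_add_one₀ qv_ne_zero]
  have hpow : qv ^ (α - k) * qv ^ (k + 1) = qv ^ (α + 1) := by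
    rw [← zpow_natCast, ← zpow_add₀ qv_ne_zero]
    push_cast
    ring_nf
  rw [qbinom_eq_div, qbinom_eq_div, qbinom_eq_div, hnum₁, hnum₂, qPochAt_succ, ← pow_succ']
  have := qPochAt_qv_qv_ne_zero k
  have := sub_ne_zero.2 (qv_pow_ne_one k.succ_ne_zero).symm
  field_simp
  linear_combination M * hpow

lemma qbinom_mul_qbinom (j m c : ℕ) :
    qbinom ((j + (m + c) : ℕ) : ℤ) (j + m) * qbinom ((j + m : ℕ) : ℤ) j =
      qbinom ((j + (m + c) : ℕ) : ℤ) j * qbinom ((m + c : ℕ) : ℤ) m := by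
  rw [qbinom_natCast_add_s8 j (m + c), qbinom_natCast_add_s8 j m, qbinom_natCast_add_s8 m c, ← add_assoc,
    qbinom_natCast_add_s8 (j + m) c]
  have := qPochAt_qv_qv_ne_zero (j + m)
  have := qPochAt_qv_qv_ne_zero (m + c)
  field_simp

lemma qbinom_add_eq_qbinom_neg_one_sub (α : ℤ) (k : ℕ) :
    qbinom (α + k) k = (-1) ^ k * (qv ^ α) ^ k * qv ^ (k + 1).choose 2 * qbinom (-1 - α) k := by
  have hx : (qv ^ (α + 1))⁻¹ * qv ^ (1 - (k : ℤ)) = qv ^ (-1 - α - k + 1) := by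
    rw [← zpow_neg, ← zpow_add₀ qv_ne_zero]
    ring_nf
  have hc : (-qv ^ (α + 1)) ^ k * qv ^ k.choose 2 =
      (-1) ^ k * (qv ^ α) ^ k * qv ^ (k + 1).choose 2 := by
    rw [Nat.choose_succ_succ', Nat.choose_one_right, zpow_add_one₀ qv_ne_zero, pow_add]
    ring
  rw [qbinom_eq_div, qbinom_eq_div, show α + k - k + 1 = α + 1 by ring,
    qPochAt_eq_neg_pow_mul (zpow_ne_zero _ qv_ne_zero) qv_ne_zero, hx, hc, mul_div_assoc]

lemma neg_one_pow_mul_qbinom_neg_one_sub_comm (a j : ℕ) :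
    (-1) ^ a * qv ^ (a + 1).choose 2 * qbinom (-1 - j) a =
      (-1) ^ j * qv ^ (j + 1).choose 2 * qbinom (-1 - a) j := by
  have h₁ := qbinom_add_eq_qbinom_neg_one_sub j a
  have h₂ := qbinom_add_eq_qbinom_neg_one_sub a j
  have hsymm := qbinom_natCast_add_comm j a
  have hq : ((qv : RatFunc ℚ) ^ (a : ℤ)) ^ j = (qv ^ (j : ℤ)) ^ a := by
    simp only [zpow_natCast, ← pow_mul, mul_comm]
  push_cast at hsymm
  rw [hq, add_comm (a : ℤ)] at h₂
  apply mul_left_cancel₀ (pow_ne_zero a (zpow_ne_zero (j : ℤ) qv_ne_zero))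
  linear_combination h₂ - h₁ - hsymm

theorem qbinom_add_eq_sum_antidiagonal (b : ℕ) (y : ℤ) (p : ℕ) :
    qbinom (b + y) p =
      ∑ ij ∈ antidiagonal p,
        qv ^ ((ij.1 : ℤ) * (y - ij.2)) * qbinom b ij.1 * qbinom y ij.2 := by
  induction b generalizing p with
  | zero =>
    rw [sum_eq_single (0, p)]
    · simp [qbinom_zero_right]
    · rintro ⟨i, l⟩ hil hne
      have hi : 0 < i := by
        rw [HasAntidiagonal.mem_antidiagonal] at hil
        exact Nat.pos_of_ne_zero (by rintro rfl; simp_all)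
      rw [qbinom_natCast_of_lt hi, mul_zero, zero_mul]
    · simp
  | succ b ih =>
    cases p with
    | zero => simp [qbinom_zero_right]
    | succ p =>
      have hterm : ∀ x ∈ antidiagonal p,
          qv ^ (((x.1 + 1 : ℕ) : ℤ) * (y - x.2)) * qbinom ((b + 1 : ℕ) : ℤ) (x.1 + 1) *
              qbinom y x.2 =
            qv ^ (((x.1 + 1 : ℕ) : ℤ) * (y - x.2)) * qbinom b (x.1 + 1) * qbinom y x.2 +
              qv ^ ((b : ℤ) + y - p) *
                (qv ^ ((x.1 : ℤ) * (y - x.2)) * qbinom b x.1 * qbinom y x.2) := by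
        intro x hx
        rw [HasAntidiagonal.mem_antidiagonal] at hx
        have hpow : qv ^ (((x.1 + 1 : ℕ) : ℤ) * (y - x.2)) * qv ^ ((b : ℤ) - x.1) =
            qv ^ ((b : ℤ) + y - p) * qv ^ ((x.1 : ℤ) * (y - x.2)) := by
          rw [← zpow_add₀ qv_ne_zero, ← zpow_add₀ qv_ne_zero, ← hx]
          push_cast
          ring_nf
        push_cast at hpow ⊢
        rw [qbinom_succ_succ]
        linear_combination qbinom b x.1 * qbinom y x.2 * hpow
      rw [Nat.sum_antidiagonal_succ, sum_congr rfl hterm, sum_add_distrib, ← mul_sum, ← ih,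
        Nat.cast_succ, add_right_comm, qbinom_succ_succ, ih, Nat.sum_antidiagonal_succ]
      simp only [qbinom_zero_right]
      ring

lemma sum_range_add_of_eq_zero {M : Type*} [AddCommMonoid M] {f : ℕ → M} {j : ℕ}
    (h : ∀ k < j, f k = 0) (n : ℕ) :
    ∑ k ∈ range (j + n), f k = ∑ m ∈ range n, f (j + m) := by
  rw [sum_range_add, sum_eq_zero fun k hk => h k (mem_range.1 hk), zero_add]

lemma sum_qbinom_mul_qbinom_neg_mul_qbinom {a j : ℕ} (hj : j ≤ a) :
    ∑ k ∈ range (a + 1),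
        qv ^ (k ^ 2 + k) * qbinom a k * qbinom (-1 - (a : ℤ)) k * qbinom k j =
      qv ^ (a ^ 2 + a) * qbinom a j * qbinom (-1 - (j : ℤ)) a := by
  obtain ⟨b, rfl⟩ := Nat.exists_eq_add_of_le hj
  set y : ℤ := -1 - ((j + b : ℕ) : ℤ) with hy
  set G : ℕ → ℕ → RatFunc ℚ := fun i l =>
    qv ^ ((i : ℤ) * (y - l)) * qbinom b i * qbinom y l
  have hterm : ∀ m ∈ range (b + 1),
      qv ^ ((j + m) ^ 2 + (j + m)) * qbinom ((j + b : ℕ) : ℤ) (j + m) * qbinom y (j + m) *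
          qbinom ((j + m : ℕ) : ℤ) j =
        qbinom ((j + b : ℕ) : ℤ) j * qv ^ ((j + b) ^ 2 + (j + b)) *
          G (b + j - (j + m)) (j + m) := by
    intro m hm
    obtain ⟨c, rfl⟩ := Nat.exists_eq_add_of_le (Nat.lt_succ_iff.1 (mem_range.1 hm))
    have hpow : qv ^ ((j + m) ^ 2 + (j + m)) =
        qv ^ ((j + (m + c)) ^ 2 + (j + (m + c))) * qv ^ ((c : ℤ) * (y - (j + m : ℕ))) := by
      rw [← zpow_natCast, ← zpow_natCast, ← zpow_add₀ qv_ne_zero, hy]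
      push_cast
      ring_nf
    rw [show m + c + j - (j + m) = c by omega, hpow]
    simp only [G]
    rw [← qbinom_natCast_add_comm m c]
    linear_combination qv ^ ((j + (m + c)) ^ 2 + (j + (m + c))) *
      qv ^ ((c : ℤ) * (y - (j + m : ℕ))) * qbinom y (j + m) * qbinom_mul_qbinom j m c
  calc _ = ∑ m ∈ range (b + 1), qbinom ((j + b : ℕ) : ℤ) j * qv ^ ((j + b) ^ 2 + (j + b)) *
          G (b + j - (j + m)) (j + m) := by
        rw [add_assoc, sum_range_add_of_eq_zero fun k hk => by
          rw [qbinom_natCast_of_lt hk, mul_zero]]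
        exact sum_congr rfl hterm
    _ = qbinom ((j + b : ℕ) : ℤ) j * qv ^ ((j + b) ^ 2 + (j + b)) *
          ∑ l ∈ range (j + (b + 1)), G (b + j - l) l := by
        rw [← mul_sum, sum_range_add_of_eq_zero (f := fun l => G (b + j - l) l) fun l hl => by
          simp only [G]
          rw [qbinom_natCast_of_lt (by omega), mul_zero, zero_mul]]
    _ = qv ^ ((j + b) ^ 2 + (j + b)) * qbinom ((j + b : ℕ) : ℤ) j *
          qbinom (-1 - (j : ℤ)) (j + b) := by
        have hswap : ∑ ij ∈ antidiagonal (b + j), G ij.2 ij.1 =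
            ∑ ij ∈ antidiagonal (b + j), G ij.1 ij.2 :=
          Nat.sum_antidiagonal_swap (f := fun ij => G ij.1 ij.2)
        rw [show j + (b + 1) = (b + j).succ by omega,
          ← Nat.sum_antidiagonal_eq_sum_range_succ (fun l i => G i l), hswap,
          ← qbinom_add_eq_sum_antidiagonal,
          show (b : ℤ) + y = -1 - j by push_cast [y]; ring, add_comm b j]
        ring

lemma qdual_eq_sum_range (f : ℕ → Polynomial ℤ) {k a : ℕ} (hk : k ≤ a) :
    qdual f k = ∑ j ∈ range (a + 1),
      (-1 : RatFunc ℚ) ^ j * qv ^ (j * (j + 1) / 2) * qbinom k j * toF (f j) :=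
  sum_subset (range_subset_range.2 (by omega)) fun j _ hj => by
    rw [qbinom_natCast_of_lt (by simpa using hj), mul_zero, zero_mul]

lemma succ_choose_two (n : ℕ) : (n + 1).choose 2 = n * (n + 1) / 2 := by
  rw [Nat.choose_two_right, Nat.add_sub_cancel, mul_comm]

lemma qv_pow_sq_add_self (n : ℕ) : qv ^ (n ^ 2 + n) = (qv ^ (n * (n + 1) / 2)) ^ 2 := by
  rw [← pow_mul, Nat.div_mul_cancel (Nat.even_mul_succ_self n).two_dvd]
  ring_nf

lemma neg_one_pow_mul_qv_pow_mul_qbinom_neg_one_sub_comm (a j : ℕ) :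
    (-1) ^ j * qv ^ (j * (j + 1) / 2) * (qv ^ (a ^ 2 + a) * qbinom (-1 - j) a) =
      (-1) ^ a * qv ^ (a * (a + 1) / 2) * (qv ^ (j ^ 2 + j) * qbinom (-1 - a) j) := by
  have hswap := neg_one_pow_mul_qbinom_neg_one_sub_comm a j
  have hsign (n : ℕ) : ((-1 : RatFunc ℚ) ^ n) ^ 2 = 1 := by
    rw [← pow_mul, pow_mul', neg_one_sq, one_pow]
  rw [succ_choose_two, succ_choose_two] at hswap
  rw [qv_pow_sq_add_self, qv_pow_sq_add_self]
  linear_combination (-1) ^ j * qv ^ (j * (j + 1) / 2) * qv ^ (a * (a + 1) / 2) *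
      ((-1) ^ a * hswap - qv ^ (a * (a + 1) / 2) * qbinom (-1 - j) a * hsign a) +
    (-1) ^ a * qv ^ (a * (a + 1) / 2) * (qv ^ (j * (j + 1) / 2)) ^ 2 * qbinom (-1 - a) j * hsign j

theorem stmt8_general (f : ℕ → Polynomial ℤ) (a : ℕ) :
    ∑ k ∈ Finset.range (a + 1),
        qv ^ (k ^ 2 + k) * qbinom a k * qbinom (-1 - (a : ℤ)) k * qdual f k =
      (-1 : RatFunc ℚ) ^ a * qv ^ (a * (a + 1) / 2) *
        ∑ j ∈ Finset.range (a + 1),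
          qv ^ (j ^ 2 + j) * qbinom a j * qbinom (-1 - (a : ℤ)) j * toF (f j) := by
  calc _ = ∑ j ∈ range (a + 1), (-1 : RatFunc ℚ) ^ j * qv ^ (j * (j + 1) / 2) * toF (f j) *
          ∑ k ∈ range (a + 1),
            qv ^ (k ^ 2 + k) * qbinom a k * qbinom (-1 - (a : ℤ)) k * qbinom k j := by
        simp_rw [mul_sum]
        rw [sum_comm]
        refine sum_congr rfl fun k hk => ?_
        rw [qdual_eq_sum_range f (mem_range_succ_iff.1 hk), mul_sum]
        exact sum_congr rfl fun j _ => by ring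
    _ = _ := by
        rw [mul_sum]
        refine sum_congr rfl fun j hj => ?_
        rw [sum_qbinom_mul_qbinom_neg_mul_qbinom (mem_range_succ_iff.1 hj)]
        linear_combination toF (f j) * qbinom a j *
          neg_one_pow_mul_qv_pow_mul_qbinom_neg_one_sub_comm a j

/-- q-binomial transform fixed point: for `0 ≤ a ≤ n-1`,
`Σ_k q^{k²+k}[a,k][-1-a,k] f̂_k = (-1)^a q^{binom(a+1,2)} Σ_j q^{j²+j}[a,j][-1-a,j] f_j`. -/
theorem stmt8 (n : ℕ) (hn : 1 ≤ n) (f : ℕ → Polynomial ℤ) (a : ℕ) (ha : a ≤ n - 1) :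
    ∑ k ∈ Finset.range (a + 1),
        qv ^ (k ^ 2 + k) * qbinom a k * qbinom (-1 - (a : ℤ)) k * qdual f k =
      (-1 : RatFunc ℚ) ^ a * qv ^ (a * (a + 1) / 2) *
        ∑ j ∈ Finset.range (a + 1),
          qv ^ (j ^ 2 + j) * qbinom a j * qbinom (-1 - (a : ℤ)) j * toF (f j) :=
  stmt8_general f a
end

section
/- Let p be an odd prime, let α be an integer, and let f_0, …, f_{p-1} be integers. Define f̂_k = Σ_{j=0}^{k} (-1)^j binom(k, j) f_j. Then Σ_{k=0}^{p-1} binom(α, k) binom(-1-α, k) f_k ≡ (-1)^{α mod p} Σ_{k=0}^{p-1} binom(α, k) binom(-1-α, k) f̂_k (mod p²). -/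
open Finset

open Polynomial


lemma descPoch_eval (x : ℤ) (k : ℕ) :
    (descPochhammer ℤ k).eval x = ∏ i ∈ range k, (x - i) := by
  induction k with
  | zero => simp
  | succ n ih => rw [descPochhammer_succ_eval, ih, prod_range_succ]

lemma fact_mul_ringChoose (x : ℤ) (k : ℕ) :
    (k.factorial : ℤ) * Ring.choose x k = ∏ i ∈ range k, (x - i) := by
  rw [← descPoch_eval, Polynomial.eval_eq_smeval,
    Ring.descPochhammer_eq_factorial_smul_choose, nsmul_eq_mul]

lemma ringChoose_nat (x k : ℕ) : Ring.choose ((x : ℤ)) k = (x.choose k : ℤ) := by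
  exact_mod_cast Ring.choose_natCast (R := ℤ) x k

lemma ascFac_prod (x k : ℕ) : (x+1).ascFactorial k = ∏ i ∈ range k, (x + 1 + i) := by
  induction k with
  | zero => simp
  | succ n ih => rw [Nat.ascFactorial_succ, prod_range_succ, ih]; ring

lemma ringChoose_neg_nat (x k : ℕ) :
    Ring.choose (-1 - (x : ℤ)) k = (-1) ^ k * ((x + k).choose k : ℤ) := by
  have h := fact_mul_ringChoose (-1 - (x : ℤ)) k
  have h2 : ∏ i ∈ range k, ((-1 : ℤ) - x - i) = (-1)^k * ∏ i ∈ range k, ((x : ℤ) + 1 + i) := by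
    have hc : ((-1:ℤ))^k = ∏ _i ∈ range k, (-1:ℤ) := by simp
    rw [hc, ← prod_mul_distrib]
    exact prod_congr rfl fun i _ => by ring
  have h3 : ∏ i ∈ range k, ((x : ℤ) + 1 + i) = (k.factorial : ℤ) * ((x + k).choose k : ℤ) := by
    have h4 := Nat.ascFactorial_eq_factorial_mul_choose x k
    rw [ascFac_prod] at h4
    exact_mod_cast congrArg (Nat.cast : ℕ → ℤ) h4
  have hfac : (k.factorial : ℤ) ≠ 0 := by exact_mod_cast k.factorial_ne_zero
  apply mul_left_cancel₀ hfac
  rw [h, h2, h3]; ring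

lemma key_prod (α : ℤ) (k : ℕ) :
    (k.factorial : ℤ)^2 * (Ring.choose α k * Ring.choose (-1 - α) k) =
      ∏ i ∈ range k, ((i * (i+1) : ℤ) - (α^2 + α)) := by
  have h1 := fact_mul_ringChoose α k
  have h2 := fact_mul_ringChoose (-1 - α) k
  calc (k.factorial : ℤ)^2 * (Ring.choose α k * Ring.choose (-1 - α) k)
      = ((k.factorial : ℤ) * Ring.choose α k) * ((k.factorial : ℤ) * Ring.choose (-1-α) k) := by ring
    _ = (∏ i ∈ range k, (α - i)) * ∏ i ∈ range k, (-1 - α - i) := by rw [h1, h2]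
    _ = ∏ i ∈ range k, ((α - i) * (-1 - α - i)) := by rw [prod_mul_distrib]
    _ = ∏ i ∈ range k, ((i * (i+1) : ℤ) - (α^2 + α)) := prod_congr rfl fun i _ => by ring

lemma alt_diff (f : ℕ → ℤ) (n : ℕ) :
    ∑ i ∈ range (n+2), (-1:ℤ)^i * ((n+1).choose i) * f i =
      (∑ i ∈ range (n+1), (-1:ℤ)^i * (n.choose i) * f i)
        - ∑ i ∈ range (n+1), (-1:ℤ)^i * (n.choose i) * f (i+1) := by
  have e1 : ∀ i, (-1:ℤ)^(i+1) * ((n+1).choose (i+1)) * f (i+1)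
      = -((-1)^i * (n.choose i) * f (i+1)) - (-1)^i * (n.choose (i+1)) * f (i+1) := by
    intro i; rw [Nat.choose_succ_succ]; push_cast; ring
  rw [Finset.sum_range_succ' (fun i => (-1:ℤ)^i * (((n+1).choose i : ℕ) : ℤ) * f i) (n+1),
      Finset.sum_range_succ' (fun i => (-1:ℤ)^i * ((n.choose i : ℕ) : ℤ) * f i) n]
  simp only [e1]
  rw [Finset.sum_sub_distrib]
  have e2 : ∑ i ∈ range (n+1), (-1:ℤ)^i * (n.choose (i+1)) * f (i+1)
      = ∑ i ∈ range n, (-1:ℤ)^i * (n.choose (i+1)) * f (i+1) := by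
    rw [Finset.sum_range_succ, Nat.choose_succ_self]; simp
  have e3 : ∑ i ∈ range (n+1), -((-1:ℤ)^i * (n.choose i) * f (i+1))
      = -∑ i ∈ range (n+1), (-1:ℤ)^i * (n.choose i) * f (i+1) := by
    rw [Finset.sum_neg_distrib]
  rw [e3]
  have e4 : ∑ i ∈ range (n+1), (-1:ℤ)^i * ((n.choose (i+1) : ℕ) : ℤ) * f (i+1)
      = -∑ i ∈ range n, (-1:ℤ)^(i+1) * ((n.choose (i+1) : ℕ) : ℤ) * f (i+1) := by
    rw [e2, ← Finset.sum_neg_distrib]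
    exact Finset.sum_congr rfl fun i _ => by ring
  simp only [pow_zero, Nat.choose_zero_right, Nat.cast_one, one_mul, mul_one] at *
  linarith [e4]

lemma alt_vandermonde : ∀ (n a m : ℕ), n ≤ m →
    ∑ i ∈ range (n+1), (-1:ℤ)^i * (n.choose i) * ((a+i).choose m : ℤ)
      = (-1)^n * ((a.choose (m-n) : ℕ) : ℤ) := by
  intro n
  induction n with
  | zero => intro a m _; simp
  | succ n ih =>
    intro a m hm
    have h1 := ih a m (Nat.le_of_succ_le hm)
    have h2 := ih (a+1) m (Nat.le_of_succ_le hm)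
    have h2' : ∑ i ∈ range (n+1), (-1:ℤ)^i * (n.choose i) * ((a+(i+1)).choose m : ℤ)
        = (-1)^n * (((a+1).choose (m-n) : ℕ) : ℤ) := by
      rw [← h2]
      exact Finset.sum_congr rfl fun i _ => by rw [show a+(i+1) = a+1+i by ring]
    rw [show n+1+1 = n+2 from rfl, alt_diff (fun i => ((a+i).choose m : ℤ)) n, h1, h2']
    have hq : m - n = (m - (n+1)) + 1 := by omega
    rw [hq, Nat.choose_succ_succ]
    push_cast
    ring

lemma vandermonde_trunc (x j P : ℕ) (hx : x < P) :
    ∑ k ∈ Ico j P, (-1:ℤ)^k * (k.choose j) * (x.choose k) * ((x+k).choose k)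
      = (-1)^x * (x.choose j) * ((x+j).choose j) := by
  by_cases hjx : j ≤ x
  · have htrunc : ∑ k ∈ Ico j P, (-1:ℤ)^k * (k.choose j) * (x.choose k) * ((x+k).choose k)
        = ∑ k ∈ Ico j (x+1), (-1:ℤ)^k * (k.choose j) * (x.choose k) * ((x+k).choose k) := by
      refine (Finset.sum_subset (Finset.Ico_subset_Ico le_rfl hx) ?_).symm
      intro k hk hk2
      have : x < k := by
        simp only [Finset.mem_Ico] at hk hk2; omega
      rw [Nat.choose_eq_zero_of_lt this]
      simp
    rw [htrunc, Finset.sum_Ico_eq_sum_range]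
    have hr : x + 1 - j = (x - j) + 1 := by omega
    rw [hr]
    have e1 : ∀ i ∈ range ((x-j)+1),
        (-1:ℤ)^(j+i) * ((j+i).choose j) * (x.choose (j+i)) * ((x+(j+i)).choose (j+i))
        = ((-1:ℤ)^j * (x.choose j)) * ((-1:ℤ)^i * ((x-j).choose i) * (((x+j)+i).choose x : ℤ)) := by
      intro i hi
      have hik : j + i ≤ x := by
        simp only [Finset.mem_range] at hi; omega
      have hmul := Nat.choose_mul (n := x) (k := j+i) (s := j) (Nat.le_add_right j i)
      have hsymm : (x+(j+i)).choose (j+i) = ((x+j)+i).choose x := by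
        have := Nat.choose_symm (n := x+(j+i)) (k := j+i) (Nat.le_add_left _ _)
        rw [Nat.add_sub_cancel_right] at this
        rw [← this, ← Nat.add_assoc]
      have hadd : j + i - j = i := by omega
      rw [hadd] at hmul
      have : ((x.choose (j+i) : ℕ) : ℤ) * ((j+i).choose j) = (x.choose j : ℤ) * ((x-j).choose i) := by
        exact_mod_cast congrArg (Nat.cast : ℕ → ℤ) hmul
      rw [hsymm]
      push_cast at this ⊢
      rw [pow_add]
      linear_combination ((-1:ℤ)^j * (-1:ℤ)^i * (((x+j)+i).choose x : ℤ)) * this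
    rw [Finset.sum_congr rfl e1, ← Finset.mul_sum,
      alt_vandermonde (x-j) (x+j) x (by omega)]
    have hxj : x - (x - j) = j := by omega
    rw [hxj]
    have hsign : (-1:ℤ)^j * (-1:ℤ)^(x-j) = (-1:ℤ)^x := by
      rw [← pow_add]
      congr 1
      omega
    push_cast
    linear_combination ((x.choose j : ℤ) * (((x+j).choose j : ℕ) : ℤ)) * hsign
  · push_neg at hjx
    rw [Nat.choose_eq_zero_of_lt hjx]
    have hz : ∑ k ∈ Ico j P, (-1:ℤ)^k * (k.choose j) * (x.choose k) * ((x+k).choose k) = 0 := by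
      refine Finset.sum_eq_zero fun k hk => ?_
      have : x < k := by
        simp only [Finset.mem_Ico] at hk; omega
      rw [Nat.choose_eq_zero_of_lt this]
      simp
    rw [hz]
    simp

lemma perj (p : ℕ) (hp : p.Prime) (hodd : Odd p) (α : ℤ) (j : ℕ) (hj : j < p) :
    (∑ k ∈ Ico j p, (k.choose j : ℤ) * (Ring.choose α k * Ring.choose (-1-α) k)) ≡
      (-1:ℤ)^(((α % (p:ℤ)).toNat) + j) * (Ring.choose α j * Ring.choose (-1-α) j)
      [ZMOD ((p:ℤ))^2] := by
  have hppos : 0 < p := hp.pos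
  have hpz : ((p:ℤ)) ≠ 0 := by exact_mod_cast hppos.ne'
  set r : ℕ := (α % (p:ℤ)).toNat with hrdef
  have hrint : (r:ℤ) = α % p := Int.toNat_of_nonneg (Int.emod_nonneg α hpz)
  have hrlt : r < p := by
    have h2 : α % (p:ℤ) < p := Int.emod_lt_of_pos α (by exact_mod_cast hppos)
    omega
  set c : ℕ → ℤ := fun k => Ring.choose α k * Ring.choose (-1-α) k with hc
  set m : ℤ := α^2 + α with hm
  set B : ℕ → ℕ := fun k => (p-1).factorial / k.factorial with hBdef
  have hB : ∀ k, k < p → (B k) * k.factorial = (p-1).factorial := fun k hk =>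
    Nat.div_mul_cancel (Nat.factorial_dvd_factorial (by omega))
  set D : ℕ := (p-1).factorial ^ 2 with hDdef
  have hBD : ∀ k, k < p → (B k : ℤ)^2 * (k.factorial:ℤ)^2 = (D:ℤ) := by
    intro k hk
    have h2 : ((B k : ℕ):ℤ) * (k.factorial:ℤ) = ((p-1).factorial : ℤ) := by
      exact_mod_cast hB k hk
    rw [hDdef]
    push_cast
    linear_combination (((B k : ℕ):ℤ) * (k.factorial:ℤ) + ((p-1).factorial:ℤ)) * h2
  have hD : ∀ k, k < p → (D:ℤ) * c k = (B k : ℤ)^2 * ∏ i ∈ range k, ((i*(i+1):ℤ) - m) := by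
    intro k hk
    have h1 := key_prod α k
    rw [← hBD k hk, hc]
    simp only [hm]
    linear_combination (B k : ℤ)^2 * h1
  set G : ℕ → Polynomial ℤ := fun k => ∏ i ∈ range k, (Polynomial.C ((i*(i+1):ℤ)) - Polynomial.X)
    with hGdef
  have hGeval : ∀ (k : ℕ) (z : ℤ), (G k).eval z = ∏ i ∈ range k, ((i*(i+1):ℤ) - z) := by
    intro k z
    rw [hGdef]
    simp [Polynomial.eval_prod]
  set P : Polynomial ℤ :=
    (∑ k ∈ Ico j p, Polynomial.C ((k.choose j : ℤ) * (B k:ℤ)^2) * G k)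
      - Polynomial.C ((-1:ℤ)^(r+j) * (B j:ℤ)^2) * G j with hPdef
  have hPeval : ∀ z : ℤ, P.eval z =
      (∑ k ∈ Ico j p, (k.choose j : ℤ) * (B k:ℤ)^2 * ∏ i ∈ range k, ((i*(i+1):ℤ) - z))
        - (-1:ℤ)^(r+j) * (B j:ℤ)^2 * ∏ i ∈ range j, ((i*(i+1):ℤ) - z) := by
    intro z
    rw [hPdef]
    simp only [Polynomial.eval_sub, Polynomial.eval_finset_sum, Polynomial.eval_mul,
      Polynomial.eval_C, hGeval]
  have hPm : P.eval m = (D:ℤ) *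
      ((∑ k ∈ Ico j p, (k.choose j:ℤ) * c k) - (-1:ℤ)^(r+j) * c j) := by
    rw [hPeval, mul_sub, Finset.mul_sum]
    congr 1
    · refine Finset.sum_congr rfl fun k hk => ?_
      have hkp : k < p := (Finset.mem_Ico.mp hk).2
      linear_combination (-(k.choose j : ℤ)) * (hD k hkp)
    · linear_combination (-(-1:ℤ)^(r+j)) * (hD j hj)
  have hroot : ∀ x : ℕ, x < p → x % 2 = r % 2 → P.IsRoot ((x:ℤ)*((x:ℤ)+1)) := by
    intro x hxp hx2
    have hmx : ∀ k : ℕ, ∏ i ∈ range k, ((i*(i+1):ℤ) - (x:ℤ)*((x:ℤ)+1))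
        = (k.factorial:ℤ)^2 * ((-1:ℤ)^k * (x.choose k:ℤ) * ((x+k).choose k : ℤ)) := by
      intro k
      have h1 := key_prod (x:ℤ) k
      rw [ringChoose_nat, ringChoose_neg_nat] at h1
      have h2 : (x:ℤ)*((x:ℤ)+1) = (x:ℤ)^2 + (x:ℤ) := by ring
      rw [h2, ← h1]
      ring
    rw [Polynomial.IsRoot, hPeval]
    have hterm : ∀ k ∈ Ico j p, (k.choose j:ℤ) * (B k:ℤ)^2 *
        ∏ i ∈ range k, ((i*(i+1):ℤ) - (x:ℤ)*((x:ℤ)+1))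
        = (D:ℤ) * ((-1:ℤ)^k * (k.choose j:ℤ) * (x.choose k:ℤ) * ((x+k).choose k:ℤ)) := by
      intro k hk
      have hkp : k < p := (Finset.mem_Ico.mp hk).2
      rw [hmx k, ← hBD k hkp]
      ring
    rw [Finset.sum_congr rfl hterm, ← Finset.mul_sum, vandermonde_trunc x j p hxp, hmx j]
    have hsx : (-1:ℤ)^x = (-1:ℤ)^r := by
      rw [neg_one_pow_eq_pow_mod_two, hx2, ← neg_one_pow_eq_pow_mod_two]
    have hsq : ((-1:ℤ)^j)^2 = 1 := by
      have h9 : ((-1:ℤ)^j)^2 = ((-1:ℤ)^2)^j := by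
        rw [← pow_mul, ← pow_mul, mul_comm]
      rw [h9]
      simp
    have e : (-1:ℤ)^(r+j) * (B j:ℤ)^2 * ((j.factorial:ℤ)^2 *
        ((-1:ℤ)^j * (x.choose j:ℤ) * ((x+j).choose j:ℤ)))
        = (D:ℤ) * ((-1:ℤ)^x * (x.choose j:ℤ) * ((x+j).choose j:ℤ)) := by
      rw [hsx, pow_add, ← hBD j hj]
      linear_combination ((-1:ℤ)^r * (B j:ℤ)^2 * (j.factorial:ℤ)^2 *
        (x.choose j:ℤ) * ((x+j).choose j:ℤ)) * hsq
    linear_combination -e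
  set v : ℕ → ℤ := fun x => (x:ℤ)*((x:ℤ)+1) with hv
  set S : Finset ℕ := (range p).filter (fun x => x % 2 = r % 2) with hS
  have hvinj : ∀ x ∈ S, ∀ y ∈ S, v x = v y → x = y := by
    intro x _ y _ hxy
    rw [hv] at hxy
    simp only [] at hxy
    have h0 : ((x:ℤ) - y) * ((x:ℤ) + y + 1) = 0 := by linear_combination hxy
    rcases mul_eq_zero.mp h0 with h | h
    · have : (x:ℤ) = y := by linarith
      exact_mod_cast this
    · exfalso
      have h1 : (0:ℤ) ≤ x := Int.natCast_nonneg x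
      have h2 : (0:ℤ) ≤ y := Int.natCast_nonneg y
      linarith
  set T : Finset ℤ := S.image v with hT
  set M : Polynomial ℤ := ∏ a ∈ T, (Polynomial.X - Polynomial.C a) with hMdef
  have hMdvd : M ∣ P := by
    by_cases hP0 : P = 0
    · rw [hP0]; exact dvd_zero _
    · have hsub : T.val ≤ P.roots := by
        rw [Multiset.le_iff_subset T.nodup]
        intro a ha
        rw [Polynomial.mem_roots hP0]
        rw [hT] at ha
        simp only [Finset.mem_val, Finset.mem_image, hS, Finset.mem_filter, Finset.mem_range] at ha
        obtain ⟨x, ⟨hxp, hx2⟩, rfl⟩ := ha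
        exact hroot x hxp hx2
      have hd := (Multiset.prod_X_sub_C_dvd_iff_le_roots hP0 T.val).mpr hsub
      rw [hMdef, Finset.prod_eq_multiset_prod]
      exact hd
  have hMeval : M.eval m = ∏ x ∈ S, ((α - x) * (α + x + 1)) := by
    rw [hMdef, Polynomial.eval_prod, Finset.prod_image hvinj]
    refine Finset.prod_congr rfl fun x _ => ?_
    simp only [Polynomial.eval_sub, Polynomial.eval_X, Polynomial.eval_C, hv, hm]
    ring
  have hp2 : p % 2 = 1 := Nat.odd_iff.mp hodd
  have hrS : r ∈ S := by
    rw [hS]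
    simp [hrlt]
  have hr'S : p-1-r ∈ S := by
    rw [hS]
    simp only [Finset.mem_filter, Finset.mem_range]
    omega
  have hdvd1 : (p:ℤ) ∣ α - r := by
    rw [hrint, Int.emod_def]
    exact ⟨α / p, by ring⟩
  have hcast' : ((p-1-r : ℕ):ℤ) = (p:ℤ) - 1 - r := by
    have h5 : (p-1-r) + r + 1 = p := by omega
    have := congrArg (Nat.cast : ℕ → ℤ) h5
    push_cast at this
    linarith
  have hdvd2 : (p:ℤ) ∣ α + ((p-1-r:ℕ):ℤ) + 1 := by
    obtain ⟨q, hq⟩ := hdvd1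
    exact ⟨q + 1, by rw [hcast']; linarith⟩
  have hp2M : (p:ℤ)^2 ∣ M.eval m := by
    rw [hMeval]
    by_cases hcase : r = p-1-r
    · have h2r : 2*r + 1 = p := by omega
      have h2r' : (r:ℤ) + r + 1 = (p:ℤ) := by
        have h6 := congrArg (Nat.cast : ℕ → ℤ) h2r
        push_cast at h6
        linarith
      have hdvd2' : (p:ℤ) ∣ α + r + 1 := by
        obtain ⟨q, hq⟩ := hdvd1
        exact ⟨q + 1, by linarith⟩
      have hfac : (p:ℤ)^2 ∣ (α - r) * (α + r + 1) := by
        rw [sq]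
        exact mul_dvd_mul hdvd1 hdvd2'
      rw [← Finset.mul_prod_erase S _ hrS]
      exact hfac.mul_right _
    · have hr'mem : p-1-r ∈ S.erase r := Finset.mem_erase.mpr ⟨fun h => hcase h.symm, hr'S⟩
      rw [← Finset.mul_prod_erase S _ hrS, ← Finset.mul_prod_erase _ _ hr'mem, sq]
      have d1 : (p:ℤ) ∣ (α - r) * (α + r + 1) := hdvd1.mul_right _
      have d2 : (p:ℤ) ∣ (α - ((p-1-r:ℕ):ℤ)) * (α + ((p-1-r:ℕ):ℤ) + 1) := hdvd2.mul_left _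
      exact mul_dvd_mul d1 (d2.mul_right _)
  have hPdvd : (p:ℤ)^2 ∣ P.eval m := by
    obtain ⟨Q, hQ⟩ := hMdvd
    rw [hQ, Polynomial.eval_mul]
    exact hp2M.mul_right _
  rw [hPm] at hPdvd
  have hcop : IsCoprime ((p:ℤ)^2) ((D:ℕ):ℤ) := by
    have h1 : ¬ (p ∣ (p-1).factorial) := by
      intro h
      have := (Nat.Prime.dvd_factorial hp).mp h
      omega
    have h2 : Nat.Coprime p ((p-1).factorial) := (Nat.Prime.coprime_iff_not_dvd hp).mpr h1
    have h3 : IsCoprime ((p:ℤ)) (((p-1).factorial : ℕ):ℤ) := Nat.isCoprime_iff_coprime.mpr h2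
    have h4 := h3.pow (m := 2) (n := 2)
    rw [hDdef]
    push_cast
    exact h4
  have hfinal := hcop.dvd_of_dvd_mul_left hPdvd
  have : (p:ℤ)^2 ∣ ((-1:ℤ)^(r+j) * c j) - (∑ k ∈ Ico j p, (k.choose j:ℤ) * c k) := by
    have := hfinal.neg_right
    simpa [neg_sub] using this
  exact Int.ModEq.symm (Int.modEq_iff_dvd.mpr (by simpa using hfinal))

lemma modEq_sum' {n : ℤ} {s : Finset ℕ} {u v : ℕ → ℤ} (h : ∀ i ∈ s, u i ≡ v i [ZMOD n]) :
    (∑ i ∈ s, u i) ≡ (∑ i ∈ s, v i) [ZMOD n] := by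
  classical
  induction s using Finset.induction_on with
  | empty => rfl
  | insert _ _ hx ih =>
    rw [Finset.sum_insert hx, Finset.sum_insert hx]
    exact Int.ModEq.add (h _ (Finset.mem_insert_self _ _))
      (ih fun i hi => h i (Finset.mem_insert_of_mem hi))

/-- Sun's symmetric congruence with integer `α`: for an odd prime `p`,
`Σ_{k<p} C(α,k) C(-1-α,k) f_k ≡ (-1)^{α mod p} Σ_{k<p} C(α,k) C(-1-α,k) f̂_k (mod p²)`,
where `f̂_k = Σ_{j≤k} (-1)^j C(k,j) f_j` and `C` is the generalized binomial coefficient. -/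
theorem stmt12 (p : ℕ) (hp : p.Prime) (hodd : Odd p) (α : ℤ) (f : ℕ → ℤ) :
    (∑ k ∈ Finset.range p, Ring.choose α k * Ring.choose (-1 - α) k * f k) ≡
      (-1 : ℤ) ^ (α % p).toNat *
        ∑ k ∈ Finset.range p, Ring.choose α k * Ring.choose (-1 - α) k *
          (∑ j ∈ Finset.range (k + 1), (-1 : ℤ) ^ j * (k.choose j : ℤ) * f j)
      [ZMOD ((p : ℤ) ^ 2)] := by
  have hswap : ∑ k ∈ range p, Ring.choose α k * Ring.choose (-1 - α) k *
        (∑ j2 ∈ range (k+1), (-1:ℤ)^j2 * (k.choose j2) * f j2)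
      = ∑ j2 ∈ range p, ∑ k ∈ Ico j2 p,
          Ring.choose α k * Ring.choose (-1 - α) k * ((-1:ℤ)^j2 * (k.choose j2) * f j2) := by
    have h1 : ∀ k : ℕ, Ring.choose α k * Ring.choose (-1 - α) k *
          (∑ j2 ∈ range (k+1), (-1:ℤ)^j2 * (k.choose j2) * f j2)
        = ∑ j2 ∈ range (k+1), Ring.choose α k * Ring.choose (-1 - α) k *
            ((-1:ℤ)^j2 * (k.choose j2) * f j2) := fun k => Finset.mul_sum _ _ _
    simp only [h1]
    have h2 := Finset.sum_Ico_Ico_comm 0 p (fun j2 k =>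
      Ring.choose α k * Ring.choose (-1 - α) k * ((-1:ℤ)^j2 * (k.choose j2) * f j2))
    simp only [Finset.range_eq_Ico]
    rw [h2]
  rw [hswap, Finset.mul_sum]
  refine Int.ModEq.symm (modEq_sum' fun j2 hj2 => ?_)
  have hj2p : j2 < p := Finset.mem_range.mp hj2
  have hinner : ∑ k ∈ Ico j2 p,
        Ring.choose α k * Ring.choose (-1 - α) k * ((-1:ℤ)^j2 * (k.choose j2) * f j2)
      = ((-1:ℤ)^j2 * f j2) * ∑ k ∈ Ico j2 p,
          (k.choose j2 : ℤ) * (Ring.choose α k * Ring.choose (-1-α) k) := by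
    rw [Finset.mul_sum]
    exact Finset.sum_congr rfl fun k _ => by ring
  rw [hinner]
  have h := perj p hp hodd α j2 hj2p
  have h2 := h.mul_left ((-1:ℤ)^((α % (p:ℤ)).toNat) * ((-1:ℤ)^j2 * f j2))
  have he : (-1:ℤ)^((α % (p:ℤ)).toNat) * ((-1:ℤ)^j2 * f j2) *
        ((-1:ℤ)^(((α % (p:ℤ)).toNat) + j2) * (Ring.choose α j2 * Ring.choose (-1-α) j2))
      = Ring.choose α j2 * Ring.choose (-1 - α) j2 * f j2 := by
    rw [pow_add]
    have hs1 : ((-1:ℤ)^((α % (p:ℤ)).toNat))^2 = 1 := by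
      rw [← pow_mul, mul_comm, pow_mul]
      norm_num
    have hs2 : ((-1:ℤ)^j2)^2 = 1 := by
      rw [← pow_mul, mul_comm, pow_mul]
      norm_num
    linear_combination ((f j2) * (Ring.choose α j2 * Ring.choose (-1-α) j2) *
      ((-1:ℤ)^j2)^2) * hs1 + ((f j2) * (Ring.choose α j2 * Ring.choose (-1-α) j2)) * hs2
  rw [he] at h2
  have hassoc : (-1:ℤ)^((α % (p:ℤ)).toNat) * (((-1:ℤ)^j2 * f j2) * ∑ k ∈ Ico j2 p,
          (k.choose j2 : ℤ) * (Ring.choose α k * Ring.choose (-1-α) k))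
      = (-1:ℤ)^((α % (p:ℤ)).toNat) * ((-1:ℤ)^j2 * f j2) * ∑ k ∈ Ico j2 p,
          (k.choose j2 : ℤ) * (Ring.choose α k * Ring.choose (-1-α) k) := by ring
  rw [hassoc]
  exact h2
end

section
/- Let n ≥ 2, let a ∈ {0,…,n-1}, and let f_0(q),…,f_{n-1}(q) ∈ ℤ[q] with q-dual f̂_k(q) = Σ_{j=0}^{k} (-1)^j q^{binom(j+1,2)} qbinom(k,j) f_j(q). Then Σ_{k=0}^{a} q^{k²+k} qbinom(a,k) qbinom(-1-a,k) f̂_k(q) = (-1)^a q^{binom(a+1,2)} Σ_{j=0}^{a} q^{j²+j} qbinom(a,j) qbinom(-1-a,j) f_j(q). -/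
open Polynomial Finset

namespace Stmt15Aux


/-- `(q;q)_k`. -/
noncomputable def Dq (k : ℕ) : RatFunc ℚ := ∏ i ∈ Finset.range k, (1 - qv ^ (i+1))

/-- nonneg Gaussian binomial. -/
noncomputable def qb (n k : ℕ) : RatFunc ℚ := if k ≤ n then Dq n / (Dq k * Dq (n-k)) else 0

lemma qv_ne_zero : qv ≠ 0 := RatFunc.X_ne_zero

lemma qv_pow_ne_one {n : ℕ} (hn : n ≠ 0) : qv ^ n ≠ 1 := by
  intro h
  have h2 : (Polynomial.X : Polynomial ℚ) ^ n = 1 := by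
    apply RatFunc.algebraMap_injective ℚ
    rw [map_pow, map_one, RatFunc.algebraMap_X]
    exact h
  have h3 := congrArg Polynomial.natDegree h2
  simp [Polynomial.natDegree_X_pow] at h3
  exact hn h3

lemma one_sub_qv_pow_ne_zero {n : ℕ} (hn : n ≠ 0) : (1 : RatFunc ℚ) - qv ^ n ≠ 0 := by
  intro h
  exact qv_pow_ne_one hn (sub_eq_zero.mp h).symm

lemma Dq_ne_zero (k : ℕ) : Dq k ≠ 0 := by
  apply Finset.prod_ne_zero_iff.mpr
  intro i _
  exact one_sub_qv_pow_ne_zero (Nat.succ_ne_zero i)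

lemma Dq_succ (k : ℕ) : Dq (k+1) = Dq k * (1 - qv ^ (k+1)) := Finset.prod_range_succ _ _

lemma Dq_add (m k : ℕ) : Dq (m+k) = Dq m * ∏ i ∈ Finset.range k, (1 - qv ^ (m+i+1)) := by
  rw [Dq, Finset.prod_range_add]
  rfl

lemma Dq_zero : Dq 0 = 1 := rfl

lemma qb_of_le {n k : ℕ} (h : k ≤ n) : qb n k = Dq n / (Dq k * Dq (n-k)) := if_pos h

lemma qb_of_gt {n k : ℕ} (h : n < k) : qb n k = 0 := if_neg (by omega)

lemma qb_zero (n : ℕ) : qb n 0 = 1 := by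
  rw [qb_of_le (Nat.zero_le n)]
  simp [Dq_zero, div_self (Dq_ne_zero n)]

lemma qb_self (n : ℕ) : qb n n = 1 := by
  rw [qb_of_le (le_refl n)]
  simp [Dq_zero, div_self (Dq_ne_zero n)]

lemma chooseSucc (n : ℕ) : (n+1).choose 2 = n.choose 2 + n := by
  rw [Nat.choose_succ_succ, Nat.choose_one_right]; exact Nat.add_comm _ _

lemma chooseAdd (x y : ℕ) : (x+y).choose 2 = x.choose 2 + y.choose 2 + x*y := by
  induction y with
  | zero => simp
  | succ n ih => rw [← Nat.add_assoc, chooseSucc, chooseSucc n, ih]; ring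

lemma tri_eq_choose (j : ℕ) : j*(j+1)/2 = (j+1).choose 2 := by
  rw [Nat.choose_two_right]; simp [Nat.mul_comm]

lemma qpow_helper {A B C D : ℕ} (h : A + D = B + C) :
    qv^A * (qv^C)⁻¹ = qv^B * (qv^D)⁻¹ := by
  have hC : (qv:RatFunc ℚ)^C ≠ 0 := pow_ne_zero _ qv_ne_zero
  have hD : (qv:RatFunc ℚ)^D ≠ 0 := pow_ne_zero _ qv_ne_zero
  field_simp
  rw [← pow_add, ← pow_add, h]
  ring


lemma choose_one_two : Nat.choose 1 2 = 0 := rfl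

lemma twoChoose (n : ℕ) : n.choose 2 * 2 + n = n * n := by
  induction n with
  | zero => rfl
  | succ n ih =>
    calc (n+1).choose 2 * 2 + (n+1) = (n.choose 2 * 2 + n) + (2*n+1) := by
          rw [chooseSucc]; ring
      _ = n*n + (2*n+1) := by rw [ih]
      _ = (n+1)*(n+1) := by ring


lemma pascal (m i : ℕ) : qb (m+1) (i+1) = qb m (i+1) + qv^(m-i) * qb m i := by
  rcases Nat.lt_or_ge m i with h | h
  · rw [qb_of_gt (by omega), qb_of_gt (by omega), qb_of_gt (by omega)]
    ring
  · rcases Nat.eq_or_lt_of_le h with rfl | h2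
    · rw [qb_self, qb_of_gt (Nat.lt_succ_self i), qb_self]
      simp
    · obtain ⟨u, rfl⟩ : ∃ u, m = i + u + 1 := ⟨m - i - 1, by omega⟩
      rw [qb_of_le (by omega), qb_of_le (by omega), qb_of_le (by omega)]
      have e1 : i + u + 1 + 1 - (i+1) = u + 1 := by omega
      have e2 : i + u + 1 - (i+1) = u := by omega
      have e3 : i + u + 1 - i = u + 1 := by omega
      rw [e1, e2, e3]
      have hs1 : Dq (i+u+1+1) = Dq (i+u+1) * (1 - qv ^ (i+u+1+1)) := Dq_succ _
      have hs3 : Dq (i+1) = Dq i * (1 - qv ^ (i+1)) := Dq_succ _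
      have hs4 : Dq (u+1) = Dq u * (1 - qv ^ (u+1)) := Dq_succ _
      rw [hs1, hs3, hs4]
      have n1 := Dq_ne_zero (i+u+1)
      have n2 := Dq_ne_zero i
      have n3 := Dq_ne_zero u
      have n4 := one_sub_qv_pow_ne_zero (n := i+1) (by omega)
      have n5 := one_sub_qv_pow_ne_zero (n := u+1) (by omega)
      field_simp
      ring

lemma gauss (b : ℕ) (z : RatFunc ℚ) :
    ∑ i ∈ Finset.range (b+1), (-1 : RatFunc ℚ)^i * qv^(i.choose 2) * qb b i * z^i
      = ∏ r ∈ Finset.range b, (1 - z * qv^r) := by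
  induction b generalizing z with
  | zero => simp [qb_self]
  | succ b ih =>
    rw [Finset.sum_range_succ' (fun i => (-1 : RatFunc ℚ)^i * qv^(i.choose 2) * qb (b+1) i * z^i)]
    have hsplit : ∀ i ∈ Finset.range (b+1),
        (-1 : RatFunc ℚ)^(i+1) * qv^((i+1).choose 2) * qb (b+1) (i+1) * z^(i+1)
        = (-1 : RatFunc ℚ)^(i+1) * qv^((i+1).choose 2) * qb b (i+1) * z^(i+1)
          + (-z * qv^b) * ((-1 : RatFunc ℚ)^i * qv^(i.choose 2) * qb b i * z^i) := by
      intro i hi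
      have hb : i ≤ b := by simp at hi; omega
      obtain ⟨c, rfl⟩ : ∃ c, b = i + c := ⟨b - i, by omega⟩
      rw [pascal, Nat.add_sub_cancel_left, chooseSucc, pow_add, pow_add, pow_add]
      ring
    rw [Finset.sum_congr rfl hsplit, Finset.sum_add_distrib, ← Finset.mul_sum, ih]
    have hrecomb :
        (∑ i ∈ Finset.range (b+1),
            (-1 : RatFunc ℚ)^(i+1) * qv^((i+1).choose 2) * qb b (i+1) * z^(i+1))
          + (-1 : RatFunc ℚ)^0 * qv^(Nat.choose 0 2) * qb (b+1) 0 * z^0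
        = ∑ i ∈ Finset.range (b+1), (-1 : RatFunc ℚ)^i * qv^(i.choose 2) * qb b i * z^i := by
      have h0 : ((-1 : RatFunc ℚ)^0 * qv^(Nat.choose 0 2) * qb (b+1) 0 * z^0)
          = (-1 : RatFunc ℚ)^0 * qv^(Nat.choose 0 2) * qb b 0 * z^0 := by
        rw [qb_zero, qb_zero]
      rw [h0,
        ← Finset.sum_range_succ' (fun i => (-1 : RatFunc ℚ)^i * qv^(i.choose 2) * qb b i * z^i) (b+1),
        Finset.sum_range_succ]
      rw [qb_of_gt (Nat.lt_succ_self b)]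
      ring
    rw [Finset.prod_range_succ]
    linear_combination hrecomb + ih z

lemma trinom {j k a : ℕ} (hjk : j ≤ k) (hka : k ≤ a) :
    qb a k * qb k j = qb a j * qb (a-j) (k-j) := by
  rw [qb_of_le hka, qb_of_le hjk, qb_of_le (le_trans hjk hka), qb_of_le (by omega)]
  have e : a - j - (k - j) = a - k := by omega
  rw [e]
  have n1 := Dq_ne_zero k
  have n2 := Dq_ne_zero j
  have n3 := Dq_ne_zero (a-k)
  have n4 := Dq_ne_zero (k-j)
  have n5 := Dq_ne_zero (a-j)
  field_simp

lemma qb_symm {n k : ℕ} (h : k ≤ n) : qb n k = qb n (n-k) := by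
  rw [qb_of_le h, qb_of_le (by omega)]
  have e : n - (n - k) = k := by omega
  rw [e, mul_comm]

lemma bridge1 (n k : ℕ) : qbinom (n : ℤ) k = qb n k := by
  rcases le_or_gt k n with h | h
  · rw [qb_of_le h, qbinom, qbinomAt]
    have hnum : (∏ i ∈ Finset.range k, (1 - qv ^ ((n : ℤ) - k + 1 + i)))
        = ∏ i ∈ Finset.range k, (1 - qv ^ (n - k + 1 + i)) := by
      apply Finset.prod_congr rfl
      intro i hi
      congr 1
      have : (n : ℤ) - k + 1 + i = ((n - k + 1 + i : ℕ) : ℤ) := by push_cast; omega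
      rw [this, zpow_natCast]
    rw [hnum]
    have hD : Dq n = Dq (n-k) * ∏ i ∈ Finset.range k, (1 - qv ^ (n - k + 1 + i)) := by
      have := Dq_add (n-k) k
      rw [show n - k + k = n by omega] at this
      rw [this]
      apply congrArg
      apply Finset.prod_congr rfl
      intro i _
      congr 2
      omega
    have hDq : (∏ i ∈ Finset.range k, (1 - qv ^ (i+1))) = Dq k := rfl
    rw [hDq, hD]
    have n1 := Dq_ne_zero k
    have n2 := Dq_ne_zero (n-k)
    have n3 := Dq_ne_zero n
    field_simp
  · rw [qb_of_gt h, qbinom, qbinomAt]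
    have : (∏ i ∈ Finset.range k, (1 - qv ^ ((n : ℤ) - k + 1 + i))) = 0 := by
      apply Finset.prod_eq_zero (i := k - 1 - n) (by simp; omega)
      have : (n : ℤ) - k + 1 + ((k - 1 - n : ℕ) : ℤ) = 0 := by push_cast; omega
      rw [this]
      simp
    rw [this]
    simp

lemma sum_desc (a k : ℕ) : ∑ i ∈ Finset.range k, (a + k - i) = k * a + (k+1).choose 2 := by
  rw [← Finset.sum_range_reflect]
  have h : ∀ i ∈ Finset.range k, (a + k - (k - 1 - i)) = a + 1 + i := by
    intro i hi; simp at hi; omega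
  rw [Finset.sum_congr rfl h]
  rw [Finset.sum_add_distrib, Finset.sum_const, Finset.sum_range_id, Finset.card_range,
    smul_eq_mul, ← Nat.choose_two_right, chooseSucc]
  ring

lemma bridge2 (a k : ℕ) : qbinom (-1 - (a : ℤ)) k
    = (-1 : RatFunc ℚ)^k * (qv^(k*a + (k+1).choose 2))⁻¹ * qb (a+k) k := by
  rw [qbinom, qbinomAt]
  have hnum : (∏ i ∈ Finset.range k, (1 - qv ^ ((-1 - (a:ℤ)) - k + 1 + i)))
      = ∏ i ∈ Finset.range k, ((-(qv ^ (a + k - i))⁻¹) * (1 - qv ^ (a + k - i))) := by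
    apply Finset.prod_congr rfl
    intro i hi
    simp at hi
    have he : (-1 - (a:ℤ)) - k + 1 + i = -((a + k - i : ℕ) : ℤ) := by push_cast; omega
    rw [he, zpow_neg, zpow_natCast]
    have hne : (qv : RatFunc ℚ) ^ (a + k - i) ≠ 0 := pow_ne_zero _ qv_ne_zero
    field_simp
    ring
  rw [hnum, Finset.prod_mul_distrib]
  have h1 : (∏ i ∈ Finset.range k, (-(qv ^ (a + k - i))⁻¹))
      = (-1 : RatFunc ℚ)^k * (qv ^ (k*a + (k+1).choose 2))⁻¹ := by
    have : ∀ i ∈ Finset.range k, (-(qv ^ (a + k - i))⁻¹ : RatFunc ℚ)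
        = (-1) * (qv ^ (a + k - i))⁻¹ := by intro i _; ring
    rw [Finset.prod_congr rfl this, Finset.prod_mul_distrib, Finset.prod_const,
      Finset.prod_inv_distrib, Finset.prod_pow_eq_pow_sum, sum_desc]
    simp
  have h2 : (∏ i ∈ Finset.range k, (1 - qv ^ (a + k - i)))
      = ∏ i ∈ Finset.range k, (1 - qv ^ (a + 1 + i)) := by
    rw [← Finset.prod_range_reflect]
    apply Finset.prod_congr rfl
    intro i hi
    simp at hi
    congr 2
    omega
  have h3 : Dq (a+k) = Dq a * ∏ i ∈ Finset.range k, (1 - qv ^ (a + 1 + i)) := by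
    rw [Dq_add]
    apply congrArg
    apply Finset.prod_congr rfl
    intro i _
    congr 2
    omega
  rw [h1, h2, qb_of_le (by omega : k ≤ a + k)]
  rw [show a + k - k = a by omega]
  have hDq : (∏ i ∈ Finset.range k, (1 - qv ^ (i+1))) = Dq k := rfl
  rw [hDq, h3]
  have n1 := Dq_ne_zero k
  have n2 := Dq_ne_zero a
  have n3 : (qv : RatFunc ℚ) ^ (k*a + (k+1).choose 2) ≠ 0 := pow_ne_zero _ qv_ne_zero
  field_simp

lemma gaussqb (a k : ℕ) :
    qb (a+k) a = (Dq a)⁻¹ *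
      ∑ s ∈ Finset.range (a+1), (-1 : RatFunc ℚ)^s * qv^(s.choose 2) * qb a s * (qv^(k+1))^s := by
  rw [gauss a (qv^(k+1))]
  have h : ∀ r ∈ Finset.range a, (1 - qv^(k+1) * qv^r) = (1 - qv ^ (k + r + 1)) := by
    intro r _
    rw [← pow_add]
    congr 2
    omega
  rw [Finset.prod_congr rfl h]
  have h3 : Dq (k+a) = Dq k * ∏ r ∈ Finset.range a, (1 - qv ^ (k + r + 1)) := by
    rw [Dq_add]
  rw [qb_of_le (by omega : a ≤ a + k), show a + k - a = k by omega, show a + k = k + a by omega, h3]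
  have n1 := Dq_ne_zero k
  have n2 := Dq_ne_zero a
  field_simp

set_option maxHeartbeats 2000000 in
lemma core (a j b : ℕ) (hab : a = j + b) :
    ∑ k ∈ Finset.range (a + 1),
        qv ^ (k^2+k) * qb a k * qbinom (-1 - (a : ℤ)) k * qb k j
      = (-1 : RatFunc ℚ)^b * qv^((a+1).choose 2 + (j+1).choose 2) * qb a j
          * qbinom (-1 - (a : ℤ)) j := by
  subst hab
  -- Step 1 : reindex k = j + i
  rw [show j + b + 1 = j + (b+1) by omega,
    Finset.sum_range_add (fun k => qv ^ (k^2+k) * qb (j+b) k * qbinom (-1 - ((j+b : ℕ) : ℤ)) k * qb k j)]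
  have hzero : ∑ k ∈ Finset.range j,
      qv ^ (k^2+k) * qb (j+b) k * qbinom (-1 - ((j+b : ℕ) : ℤ)) k * qb k j = 0 := by
    apply Finset.sum_eq_zero
    intro k hk
    simp only [Finset.mem_range] at hk
    rw [qb_of_gt hk, mul_zero]
  rw [hzero, zero_add]
  -- Step 2 : expand each term into a double sum
  have step2 : ∀ i ∈ Finset.range (b+1),
      qv ^ ((j+i)^2+(j+i)) * qb (j+b) (j+i) * qbinom (-1 - ((j+b : ℕ) : ℤ)) (j+i) * qb (j+i) j
      = ∑ s ∈ Finset.range (j+b+1),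
          (-1 : RatFunc ℚ)^(j+i) * (-1 : RatFunc ℚ)^s * qb (j+b) j * qb b i * qb (j+b) s
            * (Dq (j+b))⁻¹ * (qv^((j+i)*(j+b) + (j+i+1).choose 2))⁻¹
            * qv^((j+i)^2+(j+i)) * qv^(s.choose 2) * (qv^(j+i+1))^s := by
    intro i hi
    simp only [Finset.mem_range] at hi
    have h1 : qbinom (-1 - ((j+b : ℕ) : ℤ)) (j+i)
        = (-1 : RatFunc ℚ)^(j+i) * (qv^((j+i)*(j+b) + (j+i+1).choose 2))⁻¹
          * qb ((j+b)+(j+i)) (j+i) := bridge2 (j+b) (j+i)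
    have h2 : qb ((j+b)+(j+i)) (j+i) = qb ((j+b)+(j+i)) (j+b) := by
      rw [qb_symm (show j+i ≤ (j+b)+(j+i) by omega), show (j+b)+(j+i) - (j+i) = j+b by omega]
    have h3 : qb ((j+b)+(j+i)) (j+b) = (Dq (j+b))⁻¹ *
        ∑ s ∈ Finset.range ((j+b)+1),
          (-1 : RatFunc ℚ)^s * qv^(s.choose 2) * qb (j+b) s * (qv^((j+i)+1))^s :=
      gaussqb (j+b) (j+i)
    have h4 : qb (j+b) (j+i) * qb (j+i) j = qb (j+b) j * qb b i := by
      have := trinom (show j ≤ j+i by omega) (show j+i ≤ j+b by omega)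
      rw [show j+b-j = b by omega, show j+i-j = i by omega] at this
      exact this
    calc qv ^ ((j+i)^2+(j+i)) * qb (j+b) (j+i) * qbinom (-1 - ((j+b : ℕ) : ℤ)) (j+i) * qb (j+i) j
        = qv ^ ((j+i)^2+(j+i)) * (qb (j+b) (j+i) * qb (j+i) j)
            * qbinom (-1 - ((j+b : ℕ) : ℤ)) (j+i) := by ring
      _ = qv ^ ((j+i)^2+(j+i)) * (qb (j+b) j * qb b i)
            * qbinom (-1 - ((j+b : ℕ) : ℤ)) (j+i) := by rw [h4]
      _ = qv ^ ((j+i)^2+(j+i)) * (qb (j+b) j * qb b i)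
            * ((-1 : RatFunc ℚ)^(j+i) * (qv^((j+i)*(j+b) + (j+i+1).choose 2))⁻¹
              * ((Dq (j+b))⁻¹ * ∑ s ∈ Finset.range ((j+b)+1),
                  (-1 : RatFunc ℚ)^s * qv^(s.choose 2) * qb (j+b) s * (qv^((j+i)+1))^s)) := by
            rw [h1, h2, h3]
      _ = _ := by
            simp only [Finset.mul_sum]
            apply Finset.sum_congr rfl
            intro s _
            ring
  rw [Finset.sum_congr rfl step2, Finset.sum_comm]
  -- Step 4 : inner sum over i via Gauss
  have step4 : ∀ s ∈ Finset.range (j+b+1),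
      (∑ i ∈ Finset.range (b+1),
          (-1 : RatFunc ℚ)^(j+i) * (-1 : RatFunc ℚ)^s * qb (j+b) j * qb b i * qb (j+b) s
            * (Dq (j+b))⁻¹ * (qv^((j+i)*(j+b) + (j+i+1).choose 2))⁻¹
            * qv^((j+i)^2+(j+i)) * qv^(s.choose 2) * (qv^(j+i+1))^s)
      = ((-1 : RatFunc ℚ)^j * (-1 : RatFunc ℚ)^s * qb (j+b) j * qb (j+b) s * (Dq (j+b))⁻¹
          * qv^(s.choose 2 + (j+1)*s + (j+1).choose 2 + (j+1).choose 2) * (qv^(j*(j+b) + (j+1).choose 2))⁻¹)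
        * ∏ r ∈ Finset.range b, (1 - (qv^(s+1) * (qv^b)⁻¹) * qv^r) := by
    intro s _
    rw [← gauss b (qv^(s+1) * (qv^b)⁻¹), Finset.mul_sum]
    apply Finset.sum_congr rfl
    intro i _
    have hmon : qv^((j+i)^2+(j+i) + (s.choose 2 + (j+i+1)*s))
          * (qv^((j+i)*(j+b) + (j+i+1).choose 2))⁻¹
        = qv^((s.choose 2 + (j+1)*s + (j+1).choose 2 + (j+1).choose 2) + (i.choose 2 + (s+1)*i))
          * (qv^(j*(j+b) + (j+1).choose 2 + b*i))⁻¹ := by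
      apply qpow_helper
      simp only [chooseAdd, choose_one_two]
      have h2j := twoChoose j
      have h2i := twoChoose i
      zify at h2j h2i ⊢
      linarith [h2j, h2i]
    calc (-1 : RatFunc ℚ)^(j+i) * (-1 : RatFunc ℚ)^s * qb (j+b) j * qb b i * qb (j+b) s
            * (Dq (j+b))⁻¹ * (qv^((j+i)*(j+b) + (j+i+1).choose 2))⁻¹
            * qv^((j+i)^2+(j+i)) * qv^(s.choose 2) * (qv^(j+i+1))^s
        = ((-1 : RatFunc ℚ)^(j+i) * (-1 : RatFunc ℚ)^s * qb (j+b) j * qb b i * qb (j+b) s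
            * (Dq (j+b))⁻¹)
          * (qv^((j+i)^2+(j+i) + (s.choose 2 + (j+i+1)*s))
              * (qv^((j+i)*(j+b) + (j+i+1).choose 2))⁻¹) := by ring
      _ = ((-1 : RatFunc ℚ)^(j+i) * (-1 : RatFunc ℚ)^s * qb (j+b) j * qb b i * qb (j+b) s
            * (Dq (j+b))⁻¹)
          * (qv^((s.choose 2 + (j+1)*s + (j+1).choose 2 + (j+1).choose 2) + (i.choose 2 + (s+1)*i))
              * (qv^(j*(j+b) + (j+1).choose 2 + b*i))⁻¹) := by rw [hmon]
      _ = _ := by ring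
  rw [Finset.sum_congr rfl step4]
  -- Step 5 : split the sum over s at s = b
  rw [show j + b + 1 = b + (j+1) by omega,
    Finset.sum_range_add (fun s =>
      ((-1 : RatFunc ℚ)^j * (-1 : RatFunc ℚ)^s * qb (j+b) j * qb (j+b) s * (Dq (j+b))⁻¹
          * qv^(s.choose 2 + (j+1)*s + (j+1).choose 2 + (j+1).choose 2) * (qv^(j*(j+b) + (j+1).choose 2))⁻¹)
        * ∏ r ∈ Finset.range b, (1 - (qv^(s+1) * (qv^b)⁻¹) * qv^r))]
  have hzero2 : ∑ s ∈ Finset.range b,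
      ((-1 : RatFunc ℚ)^j * (-1 : RatFunc ℚ)^s * qb (j+b) j * qb (j+b) s * (Dq (j+b))⁻¹
          * qv^(s.choose 2 + (j+1)*s + (j+1).choose 2 + (j+1).choose 2) * (qv^(j*(j+b) + (j+1).choose 2))⁻¹)
        * ∏ r ∈ Finset.range b, (1 - (qv^(s+1) * (qv^b)⁻¹) * qv^r) = 0 := by
    apply Finset.sum_eq_zero
    intro s hs
    simp only [Finset.mem_range] at hs
    have hfac : (1 : RatFunc ℚ) - (qv^(s+1) * (qv^b)⁻¹) * qv^(b-1-s) = 0 := by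
      rw [mul_right_comm, ← pow_add, show s+1+(b-1-s) = b by omega,
        mul_inv_cancel₀ (pow_ne_zero _ qv_ne_zero), sub_self]
    rw [Finset.prod_eq_zero (Finset.mem_range.mpr (show b-1-s < b by omega)) hfac, mul_zero]
  rw [hzero2, zero_add]
  -- Step 6 : rewrite the remaining sum (s = b+t)
  have step6 : ∀ t ∈ Finset.range (j+1),
      ((-1 : RatFunc ℚ)^j * (-1 : RatFunc ℚ)^(b+t) * qb (j+b) j * qb (j+b) (b+t) * (Dq (j+b))⁻¹
          * qv^((b+t).choose 2 + (j+1)*(b+t) + (j+1).choose 2 + (j+1).choose 2) * (qv^(j*(j+b) + (j+1).choose 2))⁻¹)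
        * ∏ r ∈ Finset.range b, (1 - (qv^(b+t+1) * (qv^b)⁻¹) * qv^r)
      = ((-1 : RatFunc ℚ)^j * (-1 : RatFunc ℚ)^b * qb (j+b) j
          * qv^(b.choose 2 + b*(j+1) + (j+1).choose 2 + (j+1).choose 2) * (qv^(j*(j+b) + (j+1).choose 2))⁻¹ * (Dq j)⁻¹)
        * ((-1 : RatFunc ℚ)^t * qv^(t.choose 2) * qb j t * (qv^(j+b+1))^t) := by
    intro t ht
    simp only [Finset.mem_range] at ht
    have hP : (∏ r ∈ Finset.range b, (1 - (qv^(b+t+1) * (qv^b)⁻¹) * qv^r))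
        = Dq (t+b) * (Dq t)⁻¹ := by
      have hfac : ∀ r ∈ Finset.range b,
          (1 - (qv^(b+t+1) * (qv^b)⁻¹) * qv^r) = (1 - qv^(t+r+1)) := by
        intro r _
        congr 1
        rw [mul_right_comm, ← pow_add]
        have := qpow_helper (A := b+t+1+r) (C := b) (B := t+r+1) (D := 0) (by omega)
        simpa using this
      rw [Finset.prod_congr rfl hfac]
      rw [Dq_add t b]
      field_simp [Dq_ne_zero]
    have hqb1 : qb (j+b) (b+t) = Dq (j+b) / (Dq (b+t) * Dq (j-t)) := by
      rw [qb_of_le (by omega), show j+b-(b+t) = j-t by omega]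
    have hqb2 : qb j t = Dq j / (Dq t * Dq (j-t)) := qb_of_le (by omega)
    have hpw : (b+t).choose 2 + (j+1)*(b+t) + (j+1).choose 2 + (j+1).choose 2
        = (b.choose 2 + b*(j+1) + (j+1).choose 2 + (j+1).choose 2) + (t.choose 2 + (j+b+1)*t) := by
      simp only [chooseAdd, choose_one_two]
      ring
    rw [hP, hqb1, hqb2, hpw, pow_add, pow_add]
    have hDbt : Dq (b+t) = Dq (t+b) := by rw [Nat.add_comm]
    rw [hDbt]
    generalize (qv ^ (j*(j+b) + (j+1).choose 2))⁻¹ = W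
    have d1 := Dq_ne_zero (t+b)
    have d2 := Dq_ne_zero t
    have d3 := Dq_ne_zero (j-t)
    have d4 := Dq_ne_zero j
    have d5 := Dq_ne_zero (j+b)
    field_simp
    ring
  rw [Finset.sum_congr rfl step6, ← Finset.mul_sum]
  -- Step 7 : final Gauss evaluation and comparison
  rw [gauss j (qv^(j+b+1))]
  have hprod : (∏ r ∈ Finset.range j, (1 - qv^(j+b+1) * qv^r)) = Dq ((j+b)+j) * (Dq (j+b))⁻¹ := by
    have hfac : ∀ r ∈ Finset.range j, (1 - qv^(j+b+1) * qv^r) = (1 - qv^((j+b)+r+1)) := by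
      intro r _
      rw [← pow_add]
      congr 2
      omega
    rw [Finset.prod_congr rfl hfac, Dq_add (j+b) j]
    field_simp [Dq_ne_zero]
  rw [hprod, bridge2 (j+b) j, qb_of_le (show j ≤ (j+b)+j by omega),
    show (j+b)+j-j = j+b by omega]
  have n1 := Dq_ne_zero j
  have n2 := Dq_ne_zero (j+b)
  have n3 := Dq_ne_zero ((j+b)+j)
  rw [show (j + (b+1)).choose 2 + (j+1).choose 2
      = b.choose 2 + b*(j+1) + (j+1).choose 2 + (j+1).choose 2 by
    simp only [chooseAdd, choose_one_two]; ring]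
  generalize (qv ^ (j*(j+b) + (j+1).choose 2))⁻¹ = W
  field_simp

end Stmt15Aux

/-- For `n ≥ 2` and `0 ≤ a ≤ n-1`, the weighted sum with weights
`q^{k²+k}[a,k][-1-a,k]` intertwines the q-binomial transform with
multiplication by `(-1)^a q^{binom(a+1,2)}`. -/
theorem stmt15 (n : ℕ) (hn : 2 ≤ n) (f : ℕ → Polynomial ℤ) (a : ℕ) (ha : a ≤ n - 1) :
    ∑ k ∈ Finset.range (a + 1),
        qv ^ (k ^ 2 + k) * qbinom a k * qbinom (-1 - (a : ℤ)) k * qdual f k =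
      (-1 : RatFunc ℚ) ^ a * qv ^ (a * (a + 1) / 2) *
        ∑ j ∈ Finset.range (a + 1),
          qv ^ (j ^ 2 + j) * qbinom a j * qbinom (-1 - (a : ℤ)) j * toF (f j) := by
  classical
  open Stmt15Aux in
  calc ∑ k ∈ Finset.range (a + 1),
        qv ^ (k ^ 2 + k) * qbinom a k * qbinom (-1 - (a : ℤ)) k * qdual f k
      = ∑ k ∈ Finset.range (a+1), ∑ j ∈ Finset.range (a+1),
          qv ^ (k^2+k) * qb a k * qbinom (-1 - (a : ℤ)) k
            * ((-1 : RatFunc ℚ)^j * qv^(j*(j+1)/2) * qb k j * toF (f j)) := by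
        apply Finset.sum_congr rfl
        intro k hk
        simp only [Finset.mem_range] at hk
        have hd : qdual f k = ∑ j ∈ Finset.range (a+1),
            (-1 : RatFunc ℚ)^j * qv^(j*(j+1)/2) * qb k j * toF (f j) := by
          rw [qdual]
          have hbr : ∀ j ∈ Finset.range (k+1),
              (-1 : RatFunc ℚ)^j * qv^(j*(j+1)/2) * qbinom (k : ℤ) j * toF (f j)
              = (-1 : RatFunc ℚ)^j * qv^(j*(j+1)/2) * qb k j * toF (f j) := by
            intro j _
            rw [bridge1]
          rw [Finset.sum_congr rfl hbr]
          apply Finset.sum_subset (Finset.range_subset_range.mpr (by omega))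
          intro x hx hnx
          simp only [Finset.mem_range] at hx hnx
          rw [qb_of_gt (by omega)]
          ring
        rw [hd, bridge1 a k, Finset.mul_sum]
    _ = ∑ j ∈ Finset.range (a+1), ∑ k ∈ Finset.range (a+1),
          qv ^ (k^2+k) * qb a k * qbinom (-1 - (a : ℤ)) k
            * ((-1 : RatFunc ℚ)^j * qv^(j*(j+1)/2) * qb k j * toF (f j)) := Finset.sum_comm
    _ = ∑ j ∈ Finset.range (a+1), (-1 : RatFunc ℚ)^a * qv^(a*(a+1)/2)
          * (qv^(j^2+j) * qb a j * qbinom (-1 - (a : ℤ)) j * toF (f j)) := by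
        apply Finset.sum_congr rfl
        intro j hj
        simp only [Finset.mem_range] at hj
        have hcore := core a j (a-j) (by omega)
        calc ∑ k ∈ Finset.range (a+1),
              qv ^ (k^2+k) * qb a k * qbinom (-1 - (a : ℤ)) k
                * ((-1 : RatFunc ℚ)^j * qv^(j*(j+1)/2) * qb k j * toF (f j))
            = ((-1 : RatFunc ℚ)^j * qv^(j*(j+1)/2) * toF (f j))
              * ∑ k ∈ Finset.range (a+1),
                  qv ^ (k^2+k) * qb a k * qbinom (-1 - (a : ℤ)) k * qb k j := by
              rw [Finset.mul_sum]
              exact Finset.sum_congr rfl (fun k _ => by ring)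
          _ = ((-1 : RatFunc ℚ)^j * qv^(j*(j+1)/2) * toF (f j))
              * ((-1 : RatFunc ℚ)^(a-j) * qv^((a+1).choose 2 + (j+1).choose 2) * qb a j
                  * qbinom (-1 - (a : ℤ)) j) := by rw [hcore]
          _ = _ := by
              have hsign : (-1 : RatFunc ℚ)^j * (-1 : RatFunc ℚ)^(a-j) = (-1 : RatFunc ℚ)^a := by
                rw [← pow_add]
                congr 1
                omega
              have hq : qv^(j*(j+1)/2) * qv^((a+1).choose 2 + (j+1).choose 2)
                  = qv^(a*(a+1)/2) * qv^(j^2+j) := by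
                rw [← pow_add, ← pow_add]
                congr 1
                rw [tri_eq_choose j, tri_eq_choose a]
                have h := twoChoose (j+1)
                zify at h ⊢
                linear_combination h
              have hc : ((-1 : RatFunc ℚ)^j * (-1 : RatFunc ℚ)^(a-j))
                    * (qv^(j*(j+1)/2) * qv^((a+1).choose 2 + (j+1).choose 2))
                  = (-1 : RatFunc ℚ)^a * (qv^(a*(a+1)/2) * qv^(j^2+j)) := by
                rw [hsign, hq]
              linear_combination (qb a j * qbinom (-1 - (a : ℤ)) j * toF (f j)) * hc
    _ = (-1 : RatFunc ℚ) ^ a * qv ^ (a * (a + 1) / 2) *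
        ∑ j ∈ Finset.range (a + 1),
          qv ^ (j ^ 2 + j) * qbinom a j * qbinom (-1 - (a : ℤ)) j * toF (f j) := by
        rw [Finset.mul_sum]
        apply Finset.sum_congr rfl
        intro j _
        rw [bridge1 a j]
end
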